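/- arXiv:2506.20672 — 3 statements merged into one kernel-verified Lean document; each statement's English description precedes it below -/
import Mathlib

section
/- Let $0 < c_1 \leq c_2 \leq \cdots \leq c_k$ be real numbers with $c_1 < c_k$, let $\alpha$ be a real number with $-c_k < \alpha \leq c_k$, set $c_0 = 0$ and define $w_i = \frac{1}{i+1}\left(\sum_{j=0}^{i-1} c_{k-j} - \alpha\right)$ for $i = 1, \ldots, k$. Let $i_0$ be the smallest integer in $\{1, \ldots, k\}$ such that $w_{i_0} \geq c_{k-i_0}$ (which exists since $w_k \geq 0 = c_0$). Then $w_{i_0} \in [c_{k-i_0}, c_{k-i_0+1})$. -/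
/-!
Setting `w 0 = -α`, the numbers `w i` are running averages: `(i + 2) w (i+1) = (i + 1) w i + c (k - i)`.
So `w i0` is a weighted average of `w (i0 - 1)` and `c (k - i0 + 1)`; the first lies strictly below
the second, by minimality of `i0` when `i0 ≥ 2` and by `-c k < α` when `i0 = 1`.
-/

theorem average_lt_of_lt {n a b x : ℝ} (hn : 0 ≤ n) (ha : a < x)
    (hb : (n + 2) * b = (n + 1) * a + x) : b < x := by
  nlinarith

theorem running_average_succ (k : ℕ) (c : ℕ → ℝ) (α : ℝ) (w : ℕ → ℝ)
    (hw : ∀ i, w i = (1 / (i + 1)) * ((∑ j ∈ Finset.range i, c (k - j)) - α)) (i : ℕ) :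
    ((i : ℝ) + 2) * w (i + 1) = ((i : ℝ) + 1) * w i + c (k - i) := by
  rw [hw, hw, Finset.sum_range_succ]
  push_cast
  field_simp
  ring

theorem least_index_in_interval_general (k : ℕ) (c : ℕ → ℝ) (α : ℝ)
    (hα1 : -c k < α)
    (w : ℕ → ℝ)
    (hw : ∀ i, w i = (1 / (i + 1)) * ((∑ j ∈ Finset.range i, c (k - j)) - α))
    (i0 : ℕ) (hi0a : 1 ≤ i0) (hi0b : i0 ≤ k)
    (hi0c : c (k - i0) ≤ w i0)
    (hi0min : ∀ i, 1 ≤ i → i < i0 → w i < c (k - i)) :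
    c (k - i0) ≤ w i0 ∧ w i0 < c (k - i0 + 1) := by
  refine ⟨hi0c, ?_⟩
  obtain ⟨m, rfl⟩ : ∃ m, i0 = m + 1 := ⟨i0 - 1, by omega⟩
  have hprev : w m < c (k - m) := by
    rcases Nat.eq_zero_or_pos m with rfl | hm
    · simpa [hw] using neg_lt.mp hα1
    · exact hi0min m hm (Nat.lt_succ_self m)
  rw [show k - (m + 1) + 1 = k - m by omega]
  exact average_lt_of_lt m.cast_nonneg hprev (running_average_succ k c α w hw m)

theorem least_index_in_interval (k : ℕ) (c : ℕ → ℝ) (α : ℝ)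
    (hc0 : c 0 = 0) (hpos : 0 < c 1)
    (hmono : ∀ i j, 1 ≤ i → i ≤ j → j ≤ k → c i ≤ c j)
    (hlt : c 1 < c k) (hα1 : -c k < α) (hα2 : α ≤ c k)
    (w : ℕ → ℝ)
    (hw : ∀ i, w i = (1 / (i + 1)) * ((∑ j ∈ Finset.range i, c (k - j)) - α))
    (i0 : ℕ) (hi0a : 1 ≤ i0) (hi0b : i0 ≤ k)
    (hi0c : c (k - i0) ≤ w i0)
    (hi0min : ∀ i, 1 ≤ i → i < i0 → w i < c (k - i)) :
    c (k - i0) ≤ w i0 ∧ w i0 < c (k - i0 + 1) :=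
  least_index_in_interval_general k c α hα1 w hw i0 hi0a hi0b hi0c hi0min
end

section
/- Let $0 < c_1 \leq c_2 \leq \cdots \leq c_k$ with $c_1 < c_k$, let $e_1, \ldots, e_r < 0$, and let $\alpha \in (-c_k, c_k]$. Consider the linear program: minimize $w$ over nonnegative reals $w, y_1, \ldots, y_k, z_1, \ldots, z_r$ subject to $y_1 + \cdots + y_k + z_1 + \cdots + z_r = w + \alpha$, $y_i + w \geq c_i$ for all $i$, and $z_i + w \geq e_i$ for all $i$. Set $c_0 = 0$, define $w_i = \frac{1}{i+1}(\sum_{j=0}^{i-1} c_{k-j} - \alpha)$ and let $i_0$ be the smallest index with $w_{i_0} \geq c_{k-i_0}$. Then the optimal value is $w^* = w_{i_0}$, attained at $y_1^* = \cdots = y_{k-i_0}^* = 0$, $y_i^* = c_i - w_{i_0}$ for $i > k - i_0$, and $z_1^* = \cdots = z_r^* = 0$. -/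
/-- Feasibility for the linear program of Proposition 5.1:
variables `W, y 1, …, y k, z 1, …, z r` are nonnegative,
`∑ y i + ∑ z i = W + α`, `y i + W ≥ c i` and `z i + W ≥ e i`. -/
def LPFeasible (k r : ℕ) (c e : ℕ → ℝ) (α : ℝ)
    (W : ℝ) (y z : ℕ → ℝ) : Prop :=
  0 ≤ W ∧
  (∀ i, 1 ≤ i → i ≤ k → 0 ≤ y i ∧ c i ≤ y i + W) ∧
  (∀ i, 1 ≤ i → i ≤ r → 0 ≤ z i ∧ e i ≤ z i + W) ∧
  (∑ i ∈ Finset.Icc 1 k, y i) + (∑ i ∈ Finset.Icc 1 r, z i) = W + α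

/-!
Any feasible point satisfies `y i ≥ c i - W`, so summing over the `m` largest indices and using
`y, z ≥ 0` in the equality constraint gives `(m + 1) W ≥ c_k + ⋯ + c_{k-m+1} - α`, i.e. `W ≥ w_m`
for every `m`. At `m = i₀` the bound is attained by the stated point: there `y` is nonnegative
because `c_{k-i₀} ≤ w_{i₀} ≤ c_{k-i₀+1}`, the upper bound coming from the minimality of `i₀`
through the recurrence `(i + 2) w_{i+1} = (i + 1) w_i + c_{k-i}`.
-/

open Finset

theorem sum_range_sub_eq_sum_Icc {M : Type*} [AddCommMonoid M] (f : ℕ → M) {k m : ℕ}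
    (h : m ≤ k) : ∑ j ∈ range m, f (k - j) = ∑ i ∈ Icc (k - m + 1) k, f i := by
  rw [range_eq_Ico, sum_Ico_reflect f 0 (by omega), ← Ico_add_one_right_eq_Icc]
  congr 2; omega

theorem sum_Icc_sub_const {R : Type*} [Ring R] (f : ℕ → R) (a : R) {k m : ℕ} (h : m ≤ k) :
    ∑ i ∈ Icc (k - m + 1) k, (f i - a) = ∑ i ∈ Icc (k - m + 1) k, f i - m * a := by
  rw [sum_sub_distrib, sum_const, Nat.card_Icc, nsmul_eq_mul, show k + 1 - (k - m + 1) = m by omega]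

section

variable {k r : ℕ} {c e : ℕ → ℝ} {α : ℝ}

theorem LPFeasible.sum_Icc_sub_le {W : ℝ} {y z : ℕ → ℝ} (hF : LPFeasible k r c e α W y z)
    {m : ℕ} (hm : m ≤ k) : ∑ i ∈ Icc (k - m + 1) k, c i - α ≤ (m + 1) * W := by
  obtain ⟨-, hy, hz, hsum⟩ := hF
  have hz_nonneg : 0 ≤ ∑ i ∈ Icc 1 r, z i :=
    sum_nonneg fun i hi => (hz i (mem_Icc.1 hi).1 (mem_Icc.1 hi).2).1
  have hy_top : ∑ i ∈ Icc (k - m + 1) k, y i ≤ ∑ i ∈ Icc 1 k, y i :=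
    sum_le_sum_of_subset_of_nonneg (Icc_subset_Icc (by omega) le_rfl)
      fun i hi _ => (hy i (mem_Icc.1 hi).1 (mem_Icc.1 hi).2).1
  have hc_top : ∑ i ∈ Icc (k - m + 1) k, (c i - W) ≤ ∑ i ∈ Icc (k - m + 1) k, y i :=
    sum_le_sum fun i hi => by
      obtain ⟨hi1, hik⟩ := mem_Icc.1 hi
      linarith [(hy i (by omega) hik).2]
  rw [sum_Icc_sub_const c W hm] at hc_top
  linarith

theorem lpFeasible_of_threshold {m : ℕ} {W : ℝ} (hm : m ≤ k)
    (hmono : ∀ i j, 1 ≤ i → i ≤ j → j ≤ k → c i ≤ c j)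
    (he : ∀ i, 1 ≤ i → i ≤ r → e i ≤ 0) (hW : 0 ≤ W)
    (hlow : c (k - m) ≤ W) (hhigh : W ≤ c (k - m + 1))
    (hval : (m + 1) * W = ∑ i ∈ Icc (k - m + 1) k, c i - α) :
    LPFeasible k r c e α W (fun i => if i ≤ k - m then 0 else c i - W) (fun _ => 0) := by
  refine ⟨hW, fun i hi1 hik => ?_, fun i hi1 hir => ⟨le_rfl, by linarith [he i hi1 hir]⟩, ?_⟩
  · dsimp only
    split_ifs with hi
    · exact ⟨le_rfl, by linarith [hmono i (k - m) hi1 hi (by omega)]⟩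
    · have := hmono (k - m + 1) i (by omega) (by omega) hik
      constructor <;> linarith
  · have hsplit : ∑ i ∈ Icc 1 k, (if i ≤ k - m then 0 else c i - W)
        = ∑ i ∈ Icc (k - m + 1) k, (c i - W) := by
      rw [sum_ite, sum_const_zero, zero_add]
      congr 1
      ext i
      simp only [mem_filter, mem_Icc]
      omega
    rw [hsplit, sum_const_zero, add_zero, sum_Icc_sub_const c W hm]
    linarith

variable {w : ℕ → ℝ}

theorem succ_mul_eq_sum_range_sub
    (hw : ∀ i, w i = (1 / (i + 1)) * ((∑ j ∈ Finset.range i, c (k - j)) - α)) (i : ℕ) :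
    (i + 1) * w i = ∑ j ∈ range i, c (k - j) - α := by
  rw [hw i]
  field_simp

theorem succ_lt_apply_of_lt
    (hw : ∀ i, w i = (1 / (i + 1)) * ((∑ j ∈ Finset.range i, c (k - j)) - α)) {i : ℕ}
    (h : w i < c (k - i)) : w (i + 1) < c (k - i) := by
  have hrec : ((i + 1 : ℕ) + 1 : ℝ) * w (i + 1) = (i + 1) * w i + c (k - i) := by
    rw [succ_mul_eq_sum_range_sub hw, succ_mul_eq_sum_range_sub hw, sum_range_succ]
    ring
  push_cast at hrec
  nlinarith

theorem lt_apply_sub_add_one_of_forall_lt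
    (hw : ∀ i, w i = (1 / (i + 1)) * ((∑ j ∈ Finset.range i, c (k - j)) - α))
    (hα : -c k < α) {i₀ : ℕ} (hi₀ : 1 ≤ i₀) (hi₀k : i₀ ≤ k)
    (hmin : ∀ i, 1 ≤ i → i < i₀ → w i < c (k - i)) : w i₀ < c (k - i₀ + 1) := by
  obtain ⟨n, rfl⟩ : ∃ n, i₀ = n + 1 := ⟨i₀ - 1, by omega⟩
  have hn : w n < c (k - n) := by
    rcases n.eq_zero_or_pos with rfl | hn
    · rw [hw 0]
      simp only [range_zero, sum_empty, Nat.cast_zero, Nat.sub_zero]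
      linarith
    · exact hmin n hn (by omega)
  rw [show k - (n + 1) + 1 = k - n by omega]
  exact succ_lt_apply_of_lt hw hn

end

theorem lp_optimal_solution_general (k r : ℕ) (c e : ℕ → ℝ) (α : ℝ)
    (hc0 : c 0 = 0) (hpos : 0 < c 1)
    (hmono : ∀ i j, 1 ≤ i → i ≤ j → j ≤ k → c i ≤ c j)
    (hα1 : -c k < α)
    (he : ∀ i, 1 ≤ i → i ≤ r → e i < 0)
    (w : ℕ → ℝ)
    (hw : ∀ i, w i = (1 / (i + 1)) * ((∑ j ∈ Finset.range i, c (k - j)) - α))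
    (i0 : ℕ) (hi0a : 1 ≤ i0) (hi0b : i0 ≤ k)
    (hi0c : c (k - i0) ≤ w i0)
    (hi0min : ∀ i, 1 ≤ i → i < i0 → w i < c (k - i)) :
    LPFeasible k r c e α (w i0)
      (fun i => if i ≤ k - i0 then 0 else c i - w i0) (fun _ => 0) ∧
    (∀ W y z, LPFeasible k r c e α W y z → w i0 ≤ W) := by
  have hval : (i0 + 1) * w i0 = ∑ i ∈ Icc (k - i0 + 1) k, c i - α := by
    rw [succ_mul_eq_sum_range_sub hw, sum_range_sub_eq_sum_Icc c hi0b]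
  have hc_nonneg : 0 ≤ c (k - i0) := by
    rcases (k - i0).eq_zero_or_pos with h | h
    · rw [h, hc0]
    · exact hpos.le.trans (hmono 1 (k - i0) le_rfl h (by omega))
  refine ⟨lpFeasible_of_threshold hi0b hmono (fun i hi1 hir => (he i hi1 hir).le)
    (hc_nonneg.trans hi0c) hi0c (lt_apply_sub_add_one_of_forall_lt hw hα1 hi0a hi0b hi0min).le
    hval, fun W y z hF => ?_⟩
  have hbound := hF.sum_Icc_sub_le hi0b
  rw [← hval] at hbound
  exact le_of_mul_le_mul_left hbound (by positivity)

theorem lp_optimal_solution (k r : ℕ) (c e : ℕ → ℝ) (α : ℝ)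
    (hc0 : c 0 = 0) (hpos : 0 < c 1)
    (hmono : ∀ i j, 1 ≤ i → i ≤ j → j ≤ k → c i ≤ c j)
    (hlt : c 1 < c k) (hα1 : -c k < α) (hα2 : α ≤ c k)
    (he : ∀ i, 1 ≤ i → i ≤ r → e i < 0)
    (w : ℕ → ℝ)
    (hw : ∀ i, w i = (1 / (i + 1)) * ((∑ j ∈ Finset.range i, c (k - j)) - α))
    (i0 : ℕ) (hi0a : 1 ≤ i0) (hi0b : i0 ≤ k)
    (hi0c : c (k - i0) ≤ w i0)
    (hi0min : ∀ i, 1 ≤ i → i < i0 → w i < c (k - i)) :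
    LPFeasible k r c e α (w i0)
      (fun i => if i ≤ k - i0 then 0 else c i - w i0) (fun _ => 0) ∧
    (∀ W y z, LPFeasible k r c e α W y z → w i0 ≤ W) :=
  lp_optimal_solution_general k r c e α hc0 hpos hmono hα1 he w hw i0 hi0a hi0b hi0c hi0min
end

section
/- Consider the linear program: minimize $2 y_3$ over reals $l_1, l_2, y_3$ subject to $3 y_3 = l_1 + l_2$, $l_1 + 2 y_3 \geq -1$, $l_2 + 2 y_3 \geq 2$, $0 \leq y_3 \leq 1$, $l_1 \geq 0$, $l_2 \geq 0$. The optimal value is $4/5$, attained at $(l_1, l_2, y_3) = (0, 6/5, 2/5)$. -/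
def Feasible3 (l1 l2 y3 : ℝ) : Prop :=
  3 * y3 = l1 + l2 ∧ l1 + 2 * y3 ≥ -1 ∧ l2 + 2 * y3 ≥ 2 ∧
    0 ≤ y3 ∧ y3 ≤ 1 ∧ 0 ≤ l1 ∧ 0 ≤ l2

lemma feasible3_optimum : Feasible3 0 (6 / 5) (2 / 5) := by
  unfold Feasible3
  norm_num

/-- Certificate: `3 y₃ = l₁ + l₂ ≥ l₂ ≥ 2 - 2 y₃`, using only `l₁ ≥ 0` and `l₂ + 2 y₃ ≥ 2`. -/
lemma Feasible3.two_fifths_le {l1 l2 y3 : ℝ} (h : Feasible3 l1 l2 y3) : 2 / 5 ≤ y3 := by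
  obtain ⟨hsum, -, hl2, -, -, hl1, -⟩ := h
  linarith

theorem lp_dim_three :
    Feasible3 0 (6 / 5) (2 / 5) ∧ 2 * (2 / 5 : ℝ) = 4 / 5 ∧
      ∀ l1 l2 y3 : ℝ, Feasible3 l1 l2 y3 → 4 / 5 ≤ 2 * y3 := by
  refine ⟨feasible3_optimum, by norm_num, fun l1 l2 y3 h => ?_⟩
  linarith [h.two_fifths_le]
end
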